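/- arXiv:1705.01269 — 2 statements merged into one kernel-verified Lean document; each statement's English description precedes it below -/
import Mathlib

section
/- For every integer a ≥ 1, H*(a) = ζ*(2,…,2) (with a twos) equals -2 ζ(overline{2a}), i.e., Σ_{1 ≤ m₁ ≤ … ≤ m_a} 1/(m₁²⋯m_a²) = -2 Σ_{m≥1} (-1)^m/m^{2a}. -/
/-!
Write `T(a,n)` for `ζ*({2}^a)` truncated to `m_a ≤ n` and `c(n,m) = C(2n,n+m)/C(2n,n)`. Then
`T(a,n) = 2 Σ_{m=1}^n (-1)^(m-1) c(n,m) / m^(2a)` for `n ≥ 1`: for `a = 0` this is an alternating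
binomial sum, and both sides satisfy `T(a+1,n+1) = T(a+1,n) + T(a,n+1)/(n+1)²` because
`c(n+1,m) ((n+1)² - m²) = c(n,m) (n+1)²`. As `n → ∞` the left side tends to `H*(a)`, while
`0 ≤ c(n,m) ≤ 1` and `c(n,m) → 1` let dominated convergence take the right side to `-2 ζ(2a̅)`.
-/

open Filter Finset Real

/-- `zeta k` : the Riemann zeta value `ζ(k) = Σ_{m≥1} 1/m^k`, with the convention `ζ(0) = -1/2`. -/
noncomputable def zeta (k : ℕ) : ℝ :=
  if k = 0 then -1/2 else limUnder atTop (fun N => ∑ m ∈ Finset.range N, 1/((m+1 : ℝ))^k)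

/-- `zetaA k` : the alternating zeta value `ζ(k̄) = Σ_{m≥1} (-1)^m/m^k`,
with the convention `ζ(0̄) = -1/2`. -/
noncomputable def zetaA (k : ℕ) : ℝ :=
  if k = 0 then -1/2 else
    limUnder atTop (fun N => ∑ m ∈ Finset.range N, (-1 : ℝ)^(m+1)/((m+1 : ℝ))^k)

/-- `dzeta r s = ζ(r,s) = Σ_{m≥2} (1/m^s) Σ_{j=1}^{m-1} 1/j^r`. -/
noncomputable def dzeta (r s : ℕ) : ℝ :=
  limUnder atTop (fun N => ∑ m ∈ Finset.range N,
    (1/((m+2 : ℝ))^s) * ∑ j ∈ Finset.range (m+1), 1/((j+1 : ℝ))^r)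

/-- `dzetaA1 r s = ζ(r̄,s) = Σ_{m≥2} (1/m^s) Σ_{j=1}^{m-1} (-1)^j/j^r`. -/
noncomputable def dzetaA1 (r s : ℕ) : ℝ :=
  limUnder atTop (fun N => ∑ m ∈ Finset.range N,
    (1/((m+2 : ℝ))^s) * ∑ j ∈ Finset.range (m+1), (-1 : ℝ)^(j+1)/((j+1 : ℝ))^r)

/-- `dzetaA2 r s = ζ(r,s̄) = Σ_{m≥2} ((-1)^m/m^s) Σ_{j=1}^{m-1} 1/j^r`. -/
noncomputable def dzetaA2 (r s : ℕ) : ℝ :=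
  limUnder atTop (fun N => ∑ m ∈ Finset.range N,
    ((-1 : ℝ)^(m+2)/((m+2 : ℝ))^s) * ∑ j ∈ Finset.range (m+1), 1/((j+1 : ℝ))^r)

/-- `dzetaA3 r s = ζ(r̄,s̄) = Σ_{m≥2} ((-1)^m/m^s) Σ_{j=1}^{m-1} (-1)^j/j^r`. -/
noncomputable def dzetaA3 (r s : ℕ) : ℝ :=
  limUnder atTop (fun N => ∑ m ∈ Finset.range N,
    ((-1 : ℝ)^(m+2)/((m+2 : ℝ))^s) * ∑ j ∈ Finset.range (m+1), (-1 : ℝ)^(j+1)/((j+1 : ℝ))^r)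

/-- Multiple zeta star value `ζ*(k₁,…,k_n) = Σ_{1 ≤ m₁ ≤ … ≤ m_n} ∏ 1/m_i^{k_i}`. -/
noncomputable def mzvStar (n : ℕ) (k : Fin n → ℕ) : ℝ :=
  ∑' m : {f : Fin n → ℕ+ // Monotone f}, ∏ i, (1 : ℝ)/((m.1 i : ℝ))^(k i)

/-- Multiple zeta value `ζ(k₁,…,k_n) = Σ_{1 ≤ m₁ < … < m_n} ∏ 1/m_i^{k_i}`. -/
noncomputable def mzv (n : ℕ) (k : Fin n → ℕ) : ℝ :=
  ∑' m : {f : Fin n → ℕ+ // StrictMono f}, ∏ i, (1 : ℝ)/((m.1 i : ℝ))^(k i)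

/-- The exponent string `(2,…,2,3,2,…,2)` with `a` twos before the `3` and `b` twos after. -/
def expo232 (a b : ℕ) : Fin (a+b+1) → ℕ := fun i => if (i : ℕ) = a then 3 else 2

/-- `H*(a,b) = ζ*(2^a, 3, 2^b)`. -/
noncomputable def Hstar (a b : ℕ) : ℝ := mzvStar (a+b+1) (expo232 a b)

/-- `H*(n) = ζ*(2^n)` (so `H*(0) = 1`). -/
noncomputable def HstarN (n : ℕ) : ℝ := mzvStar n (fun _ => 2)

/-- `H(a,b) = ζ(2^a, 3, 2^b)`. -/
noncomputable def Hmzv (a b : ℕ) : ℝ := mzv (a+b+1) (expo232 a b)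

/-- `H(n) = ζ(2^n)` (so `H(0) = 1`). -/
noncomputable def HmzvN (n : ℕ) : ℝ := mzv n (fun _ => 2)

open Topology

/-- `ζ*(s,…,s)` with `a` entries, truncated to `m_a ≤ n`; the recursion is on the largest index. -/
noncomputable def mzvStarTrunc (s : ℕ) : ℕ → ℕ → ℝ
  | 0, _ => 1
  | a + 1, n => ∑ k ∈ range n, mzvStarTrunc s a (k + 1) / ((k : ℝ) + 1) ^ s

lemma mzvStarTrunc_succ_succ (s a n : ℕ) :
    mzvStarTrunc s (a + 1) (n + 1) =
      mzvStarTrunc s (a + 1) n + mzvStarTrunc s a (n + 1) / ((n : ℝ) + 1) ^ s :=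
  sum_range_succ _ n

noncomputable def invPowProd (s : ℕ) {a : ℕ} (x : Fin a → ℕ+) : ℝ := ∏ i, 1 / (x i : ℝ) ^ s

def boundedMonotone (a n : ℕ) : Set (Fin a → ℕ+) := {x | Monotone x ∧ ∀ i, (x i : ℕ) ≤ n}

lemma invPowProd_nonneg (s : ℕ) {a : ℕ} (x : Fin a → ℕ+) : 0 ≤ invPowProd s x :=
  prod_nonneg fun _ _ => by positivity

lemma invPowProd_snoc (s : ℕ) {a : ℕ} (y : Fin a → ℕ+) (m : ℕ+) :
    invPowProd s (Fin.snoc y m : Fin (a + 1) → ℕ+) = 1 / (m : ℝ) ^ s * invPowProd s y := by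
  simp [invPowProd, Fin.prod_univ_castSucc, mul_comm]

lemma summable_invPowProd {s : ℕ} (hs : 1 < s) (a : ℕ) :
    Summable (invPowProd s : (Fin a → ℕ+) → ℝ) := by
  induction a with
  | zero => exact .of_finite
  | succ a ih =>
    rw [← (Fin.snocEquiv fun _ => ℕ+).summable_iff]
    have h : Summable fun m : ℕ+ => 1 / (m : ℝ) ^ s :=
      (Real.summable_one_div_nat_pow.2 hs).comp_injective PNat.coe_injective
    convert h.mul_of_nonneg ih (fun _ => by positivity) (invPowProd_nonneg s) using 1
    ext p
    exact invPowProd_snoc s p.2 p.1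

lemma Fin.monotone_snoc_iff {α : Type*} [Preorder α] {a : ℕ} (y : Fin a → α) (m : α) :
    Monotone (Fin.snoc y m : Fin (a + 1) → α) ↔ Monotone y ∧ ∀ i, y i ≤ m := by
  refine ⟨fun h => ⟨fun i j hij => ?_, fun i => ?_⟩, fun ⟨hy, hm⟩ i j hij => ?_⟩
  · simpa using h (Fin.castSucc_le_castSucc_iff.2 hij)
  · simpa using h (Fin.le_last i.castSucc)
  · induction j using Fin.lastCases with
    | last =>
      induction i using Fin.lastCases with
      | last => exact le_rfl
      | cast i => simpa using hm i
    | cast j =>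
      induction i using Fin.lastCases with
      | last => exact absurd hij (Fin.castSucc_lt_last j).not_ge
      | cast i => simpa using hy (Fin.castSucc_le_castSucc_iff.1 hij)

lemma snoc_mem_boundedMonotone_iff {a n : ℕ} (y : Fin a → ℕ+) (m : ℕ+) :
    (Fin.snoc y m : Fin (a + 1) → ℕ+) ∈ boundedMonotone (a + 1) n ↔
      (m : ℕ) ≤ n ∧ y ∈ boundedMonotone a m := by
  simp only [boundedMonotone, Set.mem_ofPred_eq, Fin.monotone_snoc_iff, Fin.forall_fin_succ',
    Fin.snoc_castSucc, Fin.snoc_last, ← PNat.coe_le_coe]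
  exact ⟨fun ⟨hy, _, hm⟩ => ⟨hm, hy⟩,
    fun ⟨hm, hy, hym⟩ => ⟨⟨hy, hym⟩, fun i => (hym i).trans hm, hm⟩⟩

lemma indicator_boundedMonotone_snoc (s : ℕ) {a n : ℕ} (y : Fin a → ℕ+) (m : ℕ+) :
    (boundedMonotone (a + 1) n).indicator (invPowProd s) (Fin.snoc y m) =
      if (m : ℕ) ≤ n then (boundedMonotone a m).indicator (invPowProd s) y / (m : ℝ) ^ s
      else 0 := by
  classical
  simp only [Set.indicator_apply, snoc_mem_boundedMonotone_iff, invPowProd_snoc]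
  by_cases hm : (m : ℕ) ≤ n <;> by_cases hy : y ∈ boundedMonotone a m <;>
    simp [hm, hy, div_eq_inv_mul]

lemma tsum_indicator_boundedMonotone {s : ℕ} (hs : 1 < s) (a n : ℕ) :
    ∑' x, (boundedMonotone a n).indicator (invPowProd s) x = mzvStarTrunc s a n := by
  induction a generalizing n with
  | zero =>
    rw [tsum_eq_single Fin.elim0 fun x hx => absurd (Subsingleton.elim x _) hx]
    simp [boundedMonotone, invPowProd, mzvStarTrunc, Monotone]
  | succ a ih =>
    let e := Fin.snocEquiv fun _ : Fin (a + 1) => ℕ+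
    have hsum : Summable fun p => (boundedMonotone (a + 1) n).indicator (invPowProd s) (e p) :=
      e.summable_iff.2 ((summable_invPowProd hs _).indicator _)
    rw [← e.tsum_eq, hsum.tsum_prod' hsum.prod_factor]
    have hinner : ∀ m : ℕ+, ∑' y, (boundedMonotone (a + 1) n).indicator (invPowProd s) (e (m, y)) =
        if (m : ℕ) ≤ n then mzvStarTrunc s a m / (m : ℝ) ^ s else 0 := by
      intro m
      simp_rw [show ∀ y, e (m, y) = Fin.snoc y m from fun _ => rfl, indicator_boundedMonotone_snoc]
      split_ifs
      · rw [tsum_div_const, ih]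
      · exact tsum_zero
    rw [tsum_congr hinner,
      tsum_pnat_eq_tsum_succ (f := fun j => if j ≤ n then mzvStarTrunc s a j / (j : ℝ) ^ s else 0),
      tsum_eq_sum (s := range n) fun k hk => if_neg (by simpa using hk)]
    exact sum_congr rfl fun k hk => by rw [if_pos (by simpa using hk)]; push_cast; rfl

lemma tendsto_mzvStarTrunc {s : ℕ} (hs : 1 < s) (a : ℕ) :
    Tendsto (mzvStarTrunc s a) atTop (𝓝 (mzvStar a fun _ => s)) := by
  have hlim : mzvStar a (fun _ => s) =
      ∑' x, {x : Fin a → ℕ+ | Monotone x}.indicator (invPowProd s) x :=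
    tsum_subtype {x | Monotone x} (invPowProd s)
  rw [hlim, funext fun n => (tsum_indicator_boundedMonotone hs a n).symm]
  refine tendsto_tsum_of_dominated_convergence (summable_invPowProd hs a) (fun x => ?_)
    (.of_forall fun n x => ?_)
  · refine tendsto_const_nhds.congr' ?_
    filter_upwards [eventually_ge_atTop (univ.sup fun i => (x i : ℕ))] with n hn
    have hx : ∀ i, (x i : ℕ) ≤ n := fun i =>
      (le_sup (f := fun i => (x i : ℕ)) (mem_univ i)).trans hn
    simp [Set.indicator, boundedMonotone, hx]
  · exact (norm_indicator_le_norm_self _ _).trans (Real.norm_of_nonneg (invPowProd_nonneg s x)).le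

theorem Nat.cast_choose_succ_right_eq {R : Type*} [Ring R] (N k : ℕ) :
    (N.choose (k + 1) : R) * (k + 1) = N.choose k * ((N : R) - k) := by
  rcases le_or_gt k N with h | h
  · simpa [Nat.cast_sub h] using congrArg (Nat.cast : ℕ → R) (Nat.choose_succ_right_eq N k)
  · simp [Nat.choose_eq_zero_of_lt h, Nat.choose_eq_zero_of_lt (h.trans k.lt_succ_self)]

theorem Finset.sum_range_neg_one_pow_mul_add {R : Type*} [CommRing R] (f : ℕ → R) (n : ℕ) :
    ∑ m ∈ range n, (-1 : R) ^ m * (f m + f (m + 1)) = f 0 - (-1) ^ n * f n := by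
  induction n with
  | zero => simp
  | succ n ih => rw [sum_range_succ, ih, pow_succ]; ring

theorem two_mul_sum_range_neg_one_pow_mul_choose {R : Type*} [CommRing R] (n : ℕ) :
    2 * ∑ m ∈ range (n + 1), (-1 : R) ^ m * ((2 * (n + 1)).choose (n + 1 + (m + 1)) : R) =
      (n + 1).centralBinom := by
  have hpascal : ∀ m, ((2 * (n + 1)).choose (n + 1 + (m + 1)) : R) =
      (2 * n + 1).choose (n + 1 + m) + (2 * n + 1).choose (n + 1 + (m + 1)) := by
    intro m
    rw [show 2 * (n + 1) = 2 * n + 1 + 1 by ring, show n + 1 + (m + 1) = n + 1 + m + 1 by ring,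
      Nat.choose_succ_succ']
    push_cast
    ring_nf
  simp_rw [hpascal]
  rw [Finset.sum_range_neg_one_pow_mul_add fun m => ((2 * n + 1).choose (n + 1 + m) : R),
    Nat.choose_eq_zero_of_lt (by omega : 2 * n + 1 < n + 1 + (n + 1)),
    Nat.centralBinom_eq_two_mul_choose, show 2 * (n + 1) = 2 * n + 1 + 1 by ring,
    Nat.choose_succ_succ' (2 * n + 1) n, ← Nat.choose_symm_half]
  push_cast
  ring

noncomputable def centralBinomRatio (n m : ℕ) : ℝ :=
  ((2 * n).choose (n + m) : ℝ) / n.centralBinom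

lemma centralBinomRatio_zero_right (n : ℕ) : centralBinomRatio n 0 = 1 := by
  simp [centralBinomRatio, Nat.centralBinom_eq_two_mul_choose,
    (Nat.choose_pos (by omega : n ≤ 2 * n)).ne']

lemma centralBinomRatio_eq_zero_of_lt {n m : ℕ} (h : n < m) : centralBinomRatio n m = 0 := by
  simp [centralBinomRatio, Nat.choose_eq_zero_of_lt (by omega : 2 * n < n + m)]

lemma centralBinomRatio_nonneg (n m : ℕ) : 0 ≤ centralBinomRatio n m := by
  unfold centralBinomRatio
  positivity

lemma centralBinomRatio_le_one (n m : ℕ) : centralBinomRatio n m ≤ 1 :=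
  div_le_one_of_le₀ (by exact_mod_cast Nat.choose_le_centralBinom _ _) (by positivity)

lemma centralBinomRatio_succ_right (n m : ℕ) :
    centralBinomRatio n (m + 1) = centralBinomRatio n m * (((n : ℝ) - m) / (n + m + 1)) := by
  have h := Nat.cast_choose_succ_right_eq (R := ℝ) (2 * n) (n + m)
  have hC : (n.centralBinom : ℝ) ≠ 0 := by exact_mod_cast n.centralBinom_ne_zero
  push_cast at h
  unfold centralBinomRatio
  rw [← add_assoc]
  field_simp
  linear_combination h

lemma tendsto_centralBinomRatio (m : ℕ) : Tendsto (centralBinomRatio · m) atTop (𝓝 1) := by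
  induction m with
  | zero => simp [centralBinomRatio_zero_right]
  | succ m ih =>
    simp_rw [centralBinomRatio_succ_right]
    have h1 := tendsto_natCast_div_add_atTop (𝕜 := ℝ) ((m : ℝ) + 1)
    have h2 : Tendsto (fun n : ℕ => (m : ℝ) / (n + (m + 1))) atTop (𝓝 0) :=
      tendsto_const_nhds.div_atTop (tendsto_atTop_add_const_right _ _ tendsto_natCast_atTop_atTop)
    simpa [sub_div, add_assoc] using ih.mul (h1.sub h2)

lemma centralBinomRatio_succ_left_mul (n m : ℕ) :
    centralBinomRatio (n + 1) m * (((n : ℝ) + 1) ^ 2 - m ^ 2) =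
      centralBinomRatio n m * ((n : ℝ) + 1) ^ 2 := by
  induction m with
  | zero => simp [centralBinomRatio_zero_right]
  | succ m ih =>
    rw [centralBinomRatio_succ_right, centralBinomRatio_succ_right]
    push_cast
    field_simp
    linear_combination ((n : ℝ) + m + 2) * (n - m) * ih

lemma two_mul_sum_range_neg_one_pow_mul_centralBinomRatio (n : ℕ) :
    2 * ∑ m ∈ range (n + 1), (-1 : ℝ) ^ m * centralBinomRatio (n + 1) (m + 1) = 1 := by
  have hC : ((n + 1).centralBinom : ℝ) ≠ 0 := by exact_mod_cast Nat.centralBinom_ne_zero _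
  simp_rw [centralBinomRatio, mul_div_assoc', ← Finset.sum_div, ← mul_div_assoc,
    two_mul_sum_range_neg_one_pow_mul_choose, div_self hC]

noncomputable def binomAltSum (k n : ℕ) : ℝ :=
  ∑ m ∈ range n, (-1) ^ m * centralBinomRatio n (m + 1) / ((m : ℝ) + 1) ^ k

lemma two_mul_binomAltSum_zero (n : ℕ) : 2 * binomAltSum 0 (n + 1) = 1 := by
  simpa [binomAltSum] using two_mul_sum_range_neg_one_pow_mul_centralBinomRatio n

lemma binomAltSum_add_two_succ (k n : ℕ) :
    binomAltSum (k + 2) (n + 1) =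
      binomAltSum (k + 2) n + binomAltSum k (n + 1) / ((n : ℝ) + 1) ^ 2 := by
  have hterm : ∀ m : ℕ, centralBinomRatio (n + 1) (m + 1) / ((m : ℝ) + 1) ^ (k + 2) =
      centralBinomRatio n (m + 1) / ((m : ℝ) + 1) ^ (k + 2) +
        centralBinomRatio (n + 1) (m + 1) / ((m : ℝ) + 1) ^ k / ((n : ℝ) + 1) ^ 2 := by
    intro m
    have h := centralBinomRatio_succ_left_mul n (m + 1)
    push_cast at h
    rw [pow_add]
    field_simp
    linear_combination h
  have hlast : centralBinomRatio n (n + 1) = 0 := centralBinomRatio_eq_zero_of_lt n.lt_succ_self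
  simp_rw [binomAltSum, mul_div_assoc, hterm, mul_add, sum_add_distrib]
  rw [sum_range_succ _ n, hlast, zero_div, mul_zero, add_zero, sum_div]
  simp only [mul_div_assoc]

lemma mzvStarTrunc_two_succ (a n : ℕ) :
    mzvStarTrunc 2 a (n + 1) = 2 * binomAltSum (2 * a) (n + 1) := by
  induction a generalizing n with
  | zero => exact (two_mul_binomAltSum_zero n).symm
  | succ a ih =>
    suffices h : ∀ n, mzvStarTrunc 2 (a + 1) n = 2 * binomAltSum (2 * a + 2) n from h (n + 1)
    intro n
    induction n with
    | zero => simp [mzvStarTrunc, binomAltSum]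
    | succ n ihn =>
      rw [mzvStarTrunc_succ_succ, ihn, ih, binomAltSum_add_two_succ]
      ring

lemma binomAltSum_eq_tsum (k n : ℕ) :
    binomAltSum k n = ∑' m : ℕ, centralBinomRatio n (m + 1) * ((-1) ^ m / ((m : ℝ) + 1) ^ k) := by
  rw [tsum_eq_sum (s := range n)]
  · exact sum_congr rfl fun m _ => by ring
  · intro m hm
    rw [centralBinomRatio_eq_zero_of_lt (by simpa using hm), zero_mul]

theorem tendsto_tsum_mul_of_tendsto_one {α β : Type*} {l : Filter α} {c : α → β → ℝ} {f : β → ℝ}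
    (hf : Summable f) (hc : ∀ n m, |c n m| ≤ 1) (hlim : ∀ m, Tendsto (c · m) l (𝓝 1)) :
    Tendsto (fun n => ∑' m, c n m * f m) l (𝓝 (∑' m, f m)) :=
  tendsto_tsum_of_dominated_convergence hf.abs (fun m => by simpa using (hlim m).mul_const (f m))
    (.of_forall fun n m => by
      rw [Real.norm_eq_abs, abs_mul]
      exact mul_le_of_le_one_left (abs_nonneg _) (hc n m))

lemma summable_neg_one_pow_div_succ_pow {k : ℕ} (hk : 2 ≤ k) :
    Summable fun m : ℕ => (-1 : ℝ) ^ m / ((m : ℝ) + 1) ^ k := by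
  have h : Summable fun m : ℕ => 1 / ((m : ℝ) + 1) ^ k := by
    simpa using (summable_nat_add_iff 1).2 (Real.summable_one_div_nat_pow.2 (by omega : 1 < k))
  exact h.of_norm_bounded fun m => by simp [abs_of_nonneg (by positivity : (0 : ℝ) ≤ m + 1)]

lemma tendsto_binomAltSum {k : ℕ} (hk : 2 ≤ k) :
    Tendsto (binomAltSum k) atTop (𝓝 (∑' m : ℕ, (-1) ^ m / ((m : ℝ) + 1) ^ k)) := by
  simp_rw [funext (binomAltSum_eq_tsum k)]
  refine tendsto_tsum_mul_of_tendsto_one (summable_neg_one_pow_div_succ_pow hk) (fun n m => ?_)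
    fun m => tendsto_centralBinomRatio (m + 1)
  rw [abs_of_nonneg (centralBinomRatio_nonneg _ _)]
  exact centralBinomRatio_le_one _ _

lemma zetaA_eq_neg_tsum {k : ℕ} (hk : 2 ≤ k) :
    zetaA k = -∑' m : ℕ, (-1) ^ m / ((m : ℝ) + 1) ^ k := by
  rw [zetaA, if_neg (by omega)]
  refine ((summable_neg_one_pow_div_succ_pow hk).hasSum.neg.tendsto_sum_nat.congr
    fun n => ?_).limUnder_eq
  simp [pow_succ, neg_div]

theorem HstarN_eq (a : ℕ) (ha : 1 ≤ a) :
    HstarN a = -2 * zetaA (2*a) := by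
  have hk : 2 ≤ 2 * a := by omega
  have hstar := (tendsto_mzvStarTrunc one_lt_two a).comp (tendsto_add_atTop_nat 1)
  have halt := ((tendsto_binomAltSum hk).comp (tendsto_add_atTop_nat 1)).const_mul 2
  rw [HstarN, tendsto_nhds_unique hstar (halt.congr fun n => (mzvStarTrunc_two_succ a n).symm),
    zetaA_eq_neg_tsum hk]
  ring
end

section
/- For an integer K ≥ 1, Σ_{a+b=K-1} H*(a,b) = Σ_{r=1}^K H*(K-r) ζ(2r+1), where the left sum is over nonnegative integers a, b with a+b = K-1, H*(a,b) = ζ*(2^a, 3, 2^b), H*(n) = ζ*(2^n) with H*(0) = 1. -/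
open Filter Finset Real

/-!
Work in `ℝ≥0∞`, where every rearrangement is free, and read a nondecreasing tuple as a multiset.
For a multiset `s` of `K` positive integers let `P(s) = ∏_{v ∈ s} v⁻²` and `R(s) = Σ_{v ∈ s} v⁻¹`.
Summing `ζ*(2^a, 3, 2^b)` over the position `a` of the `3` gives `Σ_s P(s) R(s)`. On the other
side, `H*(K-r) ζ(2r+1)` is the sum of `P(t) v^{-2r-1} = P(s) v⁻¹` over `s = t + r·{v}`, i.e. over
the pairs `(s, v)` in which `v` has multiplicity at least `r`; summing over `r` counts each `v`
with its multiplicity in `s`, which gives `Σ_s P(s) R(s)` again. Both steps hold for arbitrary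
weights in place of `v⁻²` and `v⁻¹`; the right side is finite, so the identity descends to `ℝ`.
-/

open scoped ENNReal

namespace Sym

variable {α : Type*}

noncomputable def equivMonotone [LinearOrder α] (n : ℕ) :
    {f : Fin n → α // Monotone f} ≃ Sym α n := by
  refine Equiv.ofBijective (fun f => ⟨List.ofFn f.1, by simp⟩) ⟨?_, fun s => ?_⟩
  · rintro ⟨f, hf⟩ ⟨g, hg⟩ h
    have hperm : (List.ofFn f).Perm (List.ofFn g) := Multiset.coe_eq_coe.1 (congrArg Subtype.val h)
    exact Subtype.ext <| List.ofFn_injective <|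
      hperm.eq_of_pairwise' hf.sortedLE_ofFn.pairwise hg.sortedLE_ofFn.pairwise
  · have hlen : ((s : Multiset α).sort).length = n := by rw [Multiset.length_sort, s.card_coe]
    refine ⟨⟨fun i => ((s : Multiset α).sort).get (i.cast hlen.symm),
      fun _ _ hij => (Multiset.pairwise_sort (s : Multiset α) _).rel_get_of_le hij⟩, ?_⟩
    apply Sym.ext
    change ((List.ofFn fun i => (s : Multiset α).sort.get (i.cast hlen.symm) : List α) :
      Multiset α) = s
    rw [List.ofFn_congr hlen.symm]
    simp only [Fin.cast_cast, Fin.cast_eq_self, List.ofFn_get]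
    exact Multiset.sort_eq _ _

theorem coe_equivMonotone [LinearOrder α] {n : ℕ} (f : {f : Fin n → α // Monotone f}) :
    (equivMonotone n f : Multiset α) = List.ofFn f.1 := rfl

theorem tsum_prod_map_le (n : ℕ) (y : α → ℝ≥0∞) :
    ∑' s : Sym α n, ((s : Multiset α).map y).prod ≤ (∑' a, y a) ^ n := by
  induction n with
  | zero => simp [Subsingleton.elim (default : Sym α 0) nil]
  | succ n ih =>
    calc ∑' s : Sym α (n + 1), ((s : Multiset α).map y).prod
        ≤ ∑' p : α × Sym α n, (((p.1 ::ₛ p.2 : Sym α (n + 1)) : Multiset α).map y).prod :=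
          ENNReal.tsum_le_tsum_comp_of_surjective (fun s : Sym α (n + 1) => by
            obtain ⟨a, t, rfl⟩ := s.exists_eq_cons_of_succ; exact ⟨(a, t), rfl⟩) _
      _ = (∑' a, y a) * ∑' t : Sym α n, ((t : Multiset α).map y).prod := by
          simp only [coe_cons, Multiset.map_cons, Multiset.prod_cons]
          rw [ENNReal.tsum_prod']
          simp only [ENNReal.tsum_mul_left, ENNReal.tsum_mul_right]
      _ ≤ (∑' a, y a) ^ (n + 1) := by rw [pow_succ']; gcongr

end Sym

theorem Multiset.tsum_count_smul {α M : Type*} [DecidableEq α] [AddCommMonoid M]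
    [TopologicalSpace M] (s : Multiset α) (f : α → M) :
    ∑' a, s.count a • f a = (s.map f).sum := by
  rw [Finset.sum_multiset_map_count, tsum_eq_sum]
  intro a ha
  rw [Multiset.count_eq_zero.2 (by simpa using ha), zero_smul]

theorem Finset.sum_Icc_ite_le {M : Type*} [AddCommMonoid M] {m K : ℕ} (hm : m ≤ K) (c : M) :
    ∑ r ∈ Icc 1 K, (if r ≤ m then c else 0) = m • c := by
  rw [← sum_filter, show (Icc 1 K).filter (· ≤ m) = Icc 1 m by ext; simp; omega,
    sum_const, Nat.card_Icc, Nat.add_sub_cancel]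

section

variable {α : Type*} (y z : α → ℝ≥0∞)

theorem tsum_monotone_prod_eq_tsum_sym [LinearOrder α] (n : ℕ) :
    ∑' m : {f : Fin n → α // Monotone f}, ∏ i, y (m.1 i) =
      ∑' s : Sym α n, ((s : Multiset α).map y).prod := by
  rw [← (Sym.equivMonotone n).tsum_eq]
  simp only [Sym.coe_equivMonotone, Multiset.map_coe, Multiset.prod_coe, List.map_ofFn,
    List.prod_ofFn, Function.comp_apply]

theorem sum_tsum_monotone_prod_ite_eq_tsum_sym [LinearOrder α] (n : ℕ) :
    ∑ a : Fin n, ∑' m : {f : Fin n → α // Monotone f},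
        ∏ i, (if i = a then y (m.1 i) * z (m.1 i) else y (m.1 i)) =
      ∑' s : Sym α n, ((s : Multiset α).map y).prod * ((s : Multiset α).map z).sum := by
  rw [← Summable.tsum_finsetSum fun _ _ => ENNReal.summable, ← (Sym.equivMonotone n).tsum_eq]
  refine tsum_congr fun m => ?_
  simp only [Sym.coe_equivMonotone, Multiset.map_coe, Multiset.prod_coe, Multiset.sum_coe,
    List.map_ofFn, List.prod_ofFn, List.sum_ofFn, Function.comp_apply, mul_sum]
  refine sum_congr rfl fun a _ => ?_
  rw [← Fintype.prod_ite_eq' a (fun i => z (m.1 i)), ← prod_mul_distrib]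
  exact prod_congr rfl fun i _ => by split_ifs <;> simp

/-- Stated for `n + r = K` rather than `n = K - r` to avoid casting between `Sym α (K - r + r)`
and `Sym α K`. -/
theorem tsum_sym_mul_tsum_pow_mul [DecidableEq α] {n r K : ℕ} (h : n + r = K) :
    (∑' t : Sym α n, ((t : Multiset α).map y).prod) * ∑' v, y v ^ r * z v =
      ∑' (s : Sym α K) (v : α),
        if r ≤ (s : Multiset α).count v then ((s : Multiset α).map y).prod * z v else 0 := by
  subst h
  set g : Sym α (n + r) × α → ℝ≥0∞ := fun q =>
    if r ≤ (q.1 : Multiset α).count q.2 then ((q.1 : Multiset α).map y).prod * z q.2 else 0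
  set addReplicate : Sym α n × α → Sym α (n + r) × α := fun q =>
    (q.1.append (Sym.replicate r q.2), q.2)
  have hinj : Function.Injective addReplicate := by
    rintro ⟨t, v⟩ ⟨t', v'⟩ h
    simp only [addReplicate, Prod.mk.injEq] at h
    obtain ⟨ht, rfl⟩ := h
    simpa using (Sym.append_inj_left _).1 ht
  have hsupp : Function.support g ⊆ Set.range addReplicate := by
    rintro ⟨s, v⟩ hs
    have hle : Multiset.replicate r v ≤ s := by
      by_contra hc
      exact hs (if_neg (mt Multiset.le_count_iff_replicate_le.1 hc))
    refine ⟨(⟨s - Multiset.replicate r v, ?_⟩, v), ?_⟩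
    · rw [Multiset.card_sub hle, s.card_coe, Multiset.card_replicate, Nat.add_sub_cancel]
    · ext1
      · refine Sym.ext ?_
        rw [Sym.coe_append, Sym.coe_replicate]
        exact tsub_add_cancel_of_le hle
      · rfl
  rw [← ENNReal.tsum_prod, ← hinj.tsum_eq hsupp, ← ENNReal.tsum_mul_right]
  simp_rw [← ENNReal.tsum_mul_left]
  rw [← ENNReal.tsum_prod]
  refine tsum_congr fun ⟨t, v⟩ => ?_
  simp [g, addReplicate, Sym.coe_append, Sym.coe_replicate, mul_assoc, mul_comm]

theorem sum_Icc_tsum_sym_mul_tsum_pow_mul (K : ℕ) :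
    ∑ r ∈ Icc 1 K, (∑' t : Sym α (K - r), ((t : Multiset α).map y).prod) *
        ∑' v, y v ^ r * z v =
      ∑' s : Sym α K, ((s : Multiset α).map y).prod * ((s : Multiset α).map z).sum := by
  classical
  rw [sum_congr rfl fun r hr =>
      tsum_sym_mul_tsum_pow_mul y z (Nat.sub_add_cancel (mem_Icc.1 hr).2),
    ← Summable.tsum_finsetSum fun _ _ => ENNReal.summable]
  refine tsum_congr fun s => ?_
  rw [← Summable.tsum_finsetSum fun _ _ => ENNReal.summable, ← Multiset.tsum_count_smul,
    ← ENNReal.tsum_mul_left]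
  refine tsum_congr fun v => ?_
  rw [sum_Icc_ite_le ((s : Multiset α).count_le_card v |>.trans_eq s.card_coe), nsmul_eq_mul,
    nsmul_eq_mul, mul_left_comm]

theorem sum_tsum_monotone_prod_ite_eq_sum_Icc [LinearOrder α] (n : ℕ) :
    ∑ a : Fin n, ∑' m : {f : Fin n → α // Monotone f},
        ∏ i, (if i = a then y (m.1 i) * z (m.1 i) else y (m.1 i)) =
      ∑ r ∈ Icc 1 n, (∑' m : {f : Fin (n - r) → α // Monotone f}, ∏ i, y (m.1 i)) *
        ∑' v, y v ^ r * z v := by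
  rw [sum_tsum_monotone_prod_ite_eq_tsum_sym, ← sum_Icc_tsum_sym_mul_tsum_pow_mul]
  simp only [tsum_monotone_prod_eq_tsum_sym]

end

noncomputable def pnatInv (v : ℕ+) : ℝ≥0∞ := ((v : ℕ) : ℝ≥0∞)⁻¹

theorem mzvStar_eq_toReal (n : ℕ) (k : Fin n → ℕ) :
    mzvStar n k = (∑' m : {f : Fin n → ℕ+ // Monotone f}, ∏ i, pnatInv (m.1 i) ^ k i).toReal := by
  rw [mzvStar, ENNReal.tsum_toReal_eq fun m => ?_]
  · refine tsum_congr fun m => ?_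
    simp [pnatInv, ENNReal.toReal_prod, ENNReal.toReal_inv]
  · exact ENNReal.prod_ne_top fun i _ => ENNReal.pow_ne_top (by simp [pnatInv])

theorem hasSum_zeta {k : ℕ} (hk : 1 < k) :
    HasSum (fun m : ℕ => 1 / ((m + 1 : ℝ)) ^ k) (zeta k) := by
  have hsum : Summable fun m : ℕ => 1 / ((m + 1 : ℝ)) ^ k := by
    simpa using (summable_nat_add_iff 1).2 (Real.summable_one_div_nat_pow.2 hk)
  rw [zeta, if_neg (by omega), hsum.hasSum.tendsto_sum_nat.limUnder_eq]
  exact hsum.hasSum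

theorem tsum_pnatInv_pow_eq_ofReal_zeta {k : ℕ} (hk : 1 < k) :
    ∑' v, pnatInv v ^ k = ENNReal.ofReal (zeta k) := by
  rw [← (hasSum_zeta hk).tsum_eq,
    ENNReal.ofReal_tsum_of_nonneg (fun _ => by positivity) (hasSum_zeta hk).summable,
    ← Equiv.pnatEquivNat.symm.tsum_eq]
  refine tsum_congr fun m => ?_
  rw [one_div, ← inv_pow, ENNReal.ofReal_pow (by positivity),
    ENNReal.ofReal_inv_of_pos (by positivity)]
  simp [pnatInv, Equiv.pnatEquivNat, ENNReal.ofReal_add]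

theorem tsum_monotone_prod_pnatInv_sq_ne_top (n : ℕ) :
    ∑' m : {f : Fin n → ℕ+ // Monotone f}, ∏ i, pnatInv (m.1 i) ^ 2 ≠ ⊤ := by
  have hzeta : ∑' v, pnatInv v ^ 2 ≠ ⊤ := by
    rw [tsum_pnatInv_pow_eq_ofReal_zeta one_lt_two]; exact ENNReal.ofReal_ne_top
  refine ne_top_of_le_ne_top (ENNReal.pow_ne_top (n := n) hzeta) ?_
  rw [tsum_monotone_prod_eq_tsum_sym (fun v => pnatInv v ^ 2)]
  exact Sym.tsum_prod_map_le n _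

theorem sum_antidiagonal_Hstar {K : ℕ} (hK : 1 ≤ K) :
    ∑ p ∈ antidiagonal (K - 1), Hstar p.1 p.2 =
      ∑ a : Fin K, mzvStar K fun i => if i = a then 3 else 2 := by
  have hmark : ∀ p ∈ antidiagonal (K - 1),
      Hstar p.1 p.2 = mzvStar K fun i => if (i : ℕ) = p.1 then 3 else 2 := by
    rintro ⟨a, b⟩ hab
    obtain rfl : K = a + b + 1 := by rw [HasAntidiagonal.mem_antidiagonal] at hab; omega
    rfl
  rw [sum_congr rfl hmark, Nat.sum_antidiagonal_eq_sum_range_succ_mk, Nat.succ_eq_add_one,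
    Nat.sub_add_cancel hK,
    ← Fin.sum_univ_eq_sum_range fun a => mzvStar K fun i => if (i : ℕ) = a then 3 else 2]
  simp only [Fin.val_inj]

theorem Hstar_diag_sum (K : ℕ) (hK : 1 ≤ K) :
    ∑ p ∈ Finset.HasAntidiagonal.antidiagonal (K-1), Hstar p.1 p.2
      = ∑ r ∈ Finset.Icc 1 K, HstarN (K-r) * zeta (2*r+1) := by
  have key := sum_tsum_monotone_prod_ite_eq_sum_Icc (fun v => pnatInv v ^ 2) pnatInv K
  simp only [← pow_mul, ← pow_succ, ← pow_ite] at key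
  have hodd : ∀ r ∈ Icc 1 K, 1 < 2 * r + 1 := fun r hr => by linarith [(mem_Icc.1 hr).1]
  have hrhs : ∀ r ∈ Icc 1 K, (∑' m : {f : Fin (K - r) → ℕ+ // Monotone f},
      ∏ i, pnatInv (m.1 i) ^ 2) * ∑' v, pnatInv v ^ (2 * r + 1) ≠ ⊤ := fun r hr =>
    ENNReal.mul_ne_top (tsum_monotone_prod_pnatInv_sq_ne_top _) <| by
      rw [tsum_pnatInv_pow_eq_ofReal_zeta (hodd r hr)]
      exact ENNReal.ofReal_ne_top
  have hlhs := ENNReal.sum_ne_top.1 (key ▸ ENNReal.sum_ne_top.2 hrhs)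
  rw [sum_antidiagonal_Hstar hK]
  calc ∑ a : Fin K, mzvStar K (fun i => if i = a then 3 else 2)
      = (∑ a : Fin K, ∑' m : {f : Fin K → ℕ+ // Monotone f},
          ∏ i, pnatInv (m.1 i) ^ (if i = a then 2 + 1 else 2)).toReal := by
        rw [ENNReal.toReal_sum hlhs]
        exact sum_congr rfl fun a _ => mzvStar_eq_toReal _ _
    _ = _ := by
        rw [key, ENNReal.toReal_sum hrhs]
        refine sum_congr rfl fun r hr => ?_
        rw [ENNReal.toReal_mul, HstarN, mzvStar_eq_toReal,
          tsum_pnatInv_pow_eq_ofReal_zeta (hodd r hr),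
          ENNReal.toReal_ofReal ((hasSum_zeta (hodd r hr)).nonneg fun _ => by positivity)]
end
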